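/- Let N₁,...,N_r be smooth positive functions on an open set U ⊆ ℝⁿ and let D₁,...,D_p be first-order differential operators of the form (vector field + multiplication operator). For nonnegative integers λ₁,...,λ_r set N_λ = N₁^{λ₁}⋯N_r^{λ_r}. Then l_λ(D₁ ∘ ⋯ ∘ D_p) := (1/N_λ)·(D₁∘⋯∘D_p)(N_λ) is a polynomial of degree at most p in (λ₁,...,λ_r) with coefficients in C^∞(U), whose degree-p homogeneous part equals ∏_{j=1}^p (Σᵢ λᵢ Xⱼ(Nᵢ)/Nᵢ), where Xⱼ is the vector-field part of Dⱼ. -/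

import Mathlib

open MvPolynomial

set_option linter.unusedSectionVars false
set_option maxHeartbeats 1000000

namespace CLP

variable {E : Type*} [NormedAddCommGroup E] [NormedSpace ℝ E] {r : ℕ}

noncomputable def ev (lam : Fin r → ℕ) (x : E) :
    MvPolynomial (Fin r) (E → ℝ) →+* ℝ :=
  eval₂Hom (Pi.evalRingHom (fun _ => ℝ) x) (fun i => (lam i : ℝ))

lemma ev_eq_sum (lam : Fin r → ℕ) (x : E) (Q : MvPolynomial (Fin r) (E → ℝ))
    {S : Finset (Fin r →₀ ℕ)} (hS : Q.support ⊆ S) :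
    ev lam x Q = ∑ d ∈ S, Q.coeff d x * ∏ i, (lam i : ℝ) ^ (d i) := by
  rw [ev, coe_eval₂Hom, eval₂_eq']
  rw [Finset.sum_subset hS]
  · rfl
  · intro d _ hd
    rw [notMem_support_iff] at hd
    simp [hd]

lemma ev_C (lam : Fin r → ℕ) (x : E) (f : E → ℝ) : ev lam x (C f) = f x := by
  simp [ev]

noncomputable def T (v : E → E) (Q : MvPolynomial (Fin r) (E → ℝ)) :
    MvPolynomial (Fin r) (E → ℝ) :=
  ∑ d ∈ Q.support, monomial d (fun x => fderiv ℝ (Q.coeff d) x (v x))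

lemma coeff_T (v : E → E) (Q : MvPolynomial (Fin r) (E → ℝ)) (e : Fin r →₀ ℕ) :
    (T v Q).coeff e = fun x => fderiv ℝ (Q.coeff e) x (v x) := by
  rw [T]
  by_cases he : e ∈ Q.support
  · rw [coeff_sum, Finset.sum_eq_single e]
    · simp [coeff_monomial]
    · intro d _ hd; simp [coeff_monomial, hd]
    · intro h; exact absurd he h
  · rw [notMem_support_iff] at he
    rw [coeff_sum, Finset.sum_eq_zero, he]
    · ext x
      have h0 : fderiv ℝ (0 : E → ℝ) x = 0 := fderiv_const_apply (0:ℝ)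
      simp [h0]
    · intro d hd
      rw [coeff_monomial, if_neg]
      rintro rfl
      exact (mem_support_iff.mp hd) he

lemma support_T (v : E → E) (Q : MvPolynomial (Fin r) (E → ℝ)) :
    (T v Q).support ⊆ Q.support := by
  intro e he
  rw [mem_support_iff, coeff_T] at he
  rw [mem_support_iff]
  intro h
  apply he
  ext x
  have h0 : fderiv ℝ (0 : E → ℝ) x = 0 := fderiv_const_apply (0:ℝ)
  simp [h, h0]

noncomputable def Lin (a : Fin r → E → ℝ) : MvPolynomial (Fin r) (E → ℝ) :=
  ∑ i, C (a i) * X i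

lemma ev_Lin (lam : Fin r → ℕ) (x : E) (a : Fin r → E → ℝ) :
    ev lam x (Lin a) = ∑ i, a i x * (lam i : ℝ) := by
  simp [Lin, ev]

lemma isHomogeneous_Lin (a : Fin r → E → ℝ) : (Lin a).IsHomogeneous 1 := by
  apply IsHomogeneous.sum
  intro i _
  simpa using (isHomogeneous_C _ (a i)).mul (isHomogeneous_X _ i)

lemma totalDegree_Lin (a : Fin r → E → ℝ) : (Lin a).totalDegree ≤ 1 :=
  (isHomogeneous_Lin a).totalDegree_le

lemma smoothCoeffs_Lin {a : Fin r → E → ℝ} (ha : ∀ i, ContDiff ℝ (⊤ : ℕ∞) (a i)) (d : Fin r →₀ ℕ) :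
    ContDiff ℝ (⊤ : ℕ∞) ((Lin a).coeff d) := by
  rw [Lin, coeff_sum]
  have hfun : (∑ i : Fin r, (C (a i) * X i).coeff d) =
      fun y => ∑ i : Fin r, (C (a i) * X i).coeff d y := by
    funext y; simp
  rw [hfun]
  apply ContDiff.sum
  intro i _
  rw [coeff_C_mul]
  exact (ha i).mul (by rw [coeff_X']; split_ifs <;> exact contDiff_const)

lemma smoothCoeffs_C {f : E → ℝ} (hf : ContDiff ℝ (⊤ : ℕ∞) f) (d : Fin r →₀ ℕ) :
    ContDiff ℝ (⊤ : ℕ∞) ((C f : MvPolynomial (Fin r) (E → ℝ)).coeff d) := by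
  rw [coeff_C]
  split_ifs
  exacts [hf, contDiff_const]

lemma smoothCoeffs_mul {A B : MvPolynomial (Fin r) (E → ℝ)}
    (hA : ∀ d, ContDiff ℝ (⊤ : ℕ∞) (A.coeff d)) (hB : ∀ d, ContDiff ℝ (⊤ : ℕ∞) (B.coeff d))
    (d : Fin r →₀ ℕ) : ContDiff ℝ (⊤ : ℕ∞) ((A * B).coeff d) := by
  rw [coeff_mul]
  have hfun : (∑ uv ∈ Finset.HasAntidiagonal.antidiagonal d, A.coeff uv.1 * B.coeff uv.2) =
      fun y => ∑ uv ∈ Finset.HasAntidiagonal.antidiagonal d, A.coeff uv.1 y * B.coeff uv.2 y := by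
    funext y; simp
  rw [hfun]
  exact ContDiff.sum fun uv _ => (hA _).mul (hB _)

lemma contDiff_evFun (lam : Fin r → ℕ) (Q : MvPolynomial (Fin r) (E → ℝ))
    (hQ : ∀ d, ContDiff ℝ (⊤ : ℕ∞) (Q.coeff d)) :
    ContDiff ℝ (⊤ : ℕ∞) (fun y => ev lam y Q) := by
  have h : (fun y => ev lam y Q) =
      fun y => ∑ d ∈ Q.support, Q.coeff d y * ∏ i, (lam i : ℝ) ^ (d i) := by
    funext y; exact ev_eq_sum lam y Q subset_rfl
  rw [h]
  exact ContDiff.sum fun d _ => (hQ d).mul contDiff_const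

lemma hasFDerivAt_evFun (lam : Fin r → ℕ) (Q : MvPolynomial (Fin r) (E → ℝ))
    (hQ : ∀ d, ContDiff ℝ (⊤ : ℕ∞) (Q.coeff d)) (x : E) :
    HasFDerivAt (fun y => ev lam y Q)
      (∑ d ∈ Q.support, (∏ i, (lam i : ℝ) ^ (d i)) • fderiv ℝ (Q.coeff d) x) x := by
  have h : (fun y => ev lam y Q) =
      fun y => ∑ d ∈ Q.support, Q.coeff d y * ∏ i, (lam i : ℝ) ^ (d i) := by
    funext y; exact ev_eq_sum lam y Q subset_rfl
  rw [h]
  exact HasFDerivAt.fun_sum fun d _ =>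
    (((hQ d).differentiable (by simp) x).hasFDerivAt).mul_const _

lemma fderiv_evFun (lam : Fin r → ℕ) (Q : MvPolynomial (Fin r) (E → ℝ))
    (hQ : ∀ d, ContDiff ℝ (⊤ : ℕ∞) (Q.coeff d)) (v : E → E) (x : E) :
    fderiv ℝ (fun y => ev lam y Q) x (v x) = ev lam x (T v Q) := by
  rw [(hasFDerivAt_evFun lam Q hQ x).fderiv]
  rw [ev_eq_sum lam x (T v Q) (support_T v Q)]
  simp only [ContinuousLinearMap.sum_apply, ContinuousLinearMap.smul_apply, smul_eq_mul,
    coeff_T]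
  exact Finset.sum_congr rfl fun d _ => mul_comm _ _

lemma fderiv_prod_pow (N : Fin r → E → ℝ) (hN : ∀ i, ContDiff ℝ (⊤ : ℕ∞) (N i))
    (hNpos : ∀ i x, 0 < N i x) (lam : Fin r → ℕ) (x v : E) :
    fderiv ℝ (fun y => ∏ i, N i y ^ lam i) x v =
      (∏ i, N i x ^ lam i) * ∑ i, (lam i : ℝ) * fderiv ℝ (N i) x v / N i x := by
  have hd : ∀ i : Fin r, HasFDerivAt (fun y => N i y ^ lam i)
      (((lam i : ℝ) * N i x ^ (lam i - 1)) • fderiv ℝ (N i) x) x := fun i =>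
    (hasDerivAt_pow (lam i) (N i x)).comp_hasFDerivAt x
      (((hN i).differentiable (by simp) x).hasFDerivAt)
  have hP := HasFDerivAt.finset_prod (u := Finset.univ) (fun i _ => hd i)
  rw [hP.fderiv]
  simp only [ContinuousLinearMap.sum_apply, ContinuousLinearMap.smul_apply, smul_eq_mul]
  rw [Finset.mul_sum]
  apply Finset.sum_congr rfl
  intro i _
  rcases Nat.eq_zero_or_pos (lam i) with h | h
  · simp [h]
  · have hne : N i x ≠ 0 := (hNpos i x).ne'
    have hall : ∏ k, N k x ^ lam k = N i x ^ lam i * ∏ k ∈ Finset.univ.erase i, N k x ^ lam k :=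
      (Finset.mul_prod_erase _ _ (Finset.mem_univ i)).symm
    have hpow : N i x ^ lam i = N i x ^ (lam i - 1) * N i x := by
      rw [← pow_succ, Nat.sub_add_cancel h]
    rw [hall, hpow]
    field_simp

lemma isHomogeneous_linProd {p : ℕ} (a : Fin p → Fin r → E → ℝ) (l : List (Fin p)) :
    ((l.map fun j => Lin (a j)).prod).IsHomogeneous l.length := by
  induction l with
  | nil => simpa using isHomogeneous_one (Fin r) (E → ℝ)
  | cons j l ih =>
      rw [List.map_cons, List.prod_cons, List.length_cons]
      have := (isHomogeneous_Lin (a j)).mul ih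
      rwa [add_comm] at this

lemma sum_eq_degree (d : Fin r →₀ ℕ) : (d.sum fun _ e => e) = Finsupp.degree d := rfl

/-- Main induction. -/
lemma main {p : ℕ} (X : Fin p → E → E) (b : Fin p → E → ℝ) (N : Fin r → E → ℝ)
    (hX : ∀ j, ContDiff ℝ (⊤ : ℕ∞) (X j)) (hb : ∀ j, ContDiff ℝ (⊤ : ℕ∞) (b j))
    (hN : ∀ i, ContDiff ℝ (⊤ : ℕ∞) (N i)) (hNpos : ∀ i x, 0 < N i x)
    (D : Fin p → (E → ℝ) → E → ℝ)
    (hD : ∀ j f x, D j f x = fderiv ℝ f x (X j x) + b j x * f x)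
    (l : List (Fin p)) :
    ∃ Q : MvPolynomial (Fin r) (E → ℝ),
      (∀ d, ContDiff ℝ (⊤ : ℕ∞) (Q.coeff d)) ∧
      Q.totalDegree ≤ l.length ∧
      (∀ d : Fin r →₀ ℕ, (d.sum fun _ e => e) = l.length →
        Q.coeff d = ((l.map fun j =>
          Lin fun i x => fderiv ℝ (N i) x (X j x) / N i x).prod).coeff d) ∧
      (∀ (lam : Fin r → ℕ) (x : E),
        ((l.map D).foldr (· ∘ ·) id (fun y => ∏ i, N i y ^ lam i)) x =
          (∏ i, N i x ^ lam i) * ev lam x Q) := by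
  set a : Fin p → Fin r → E → ℝ := fun j i x => fderiv ℝ (N i) x (X j x) / N i x with ha_def
  have ha : ∀ j i, ContDiff ℝ (⊤ : ℕ∞) (a j i) := fun j i =>
    (((hN i).fderiv_right (by simp)).clm_apply (hX j)).div (hN i)
      (fun x => (hNpos i x).ne')
  induction l with
  | nil =>
      refine ⟨1, ?_, ?_, ?_, ?_⟩
      · intro d
        rw [coeff_one]
        split_ifs <;> exact contDiff_const
      · simp
      · intro d _; simp
      · intro lam x; simp [ev]
  | cons j l ih =>
      obtain ⟨Q, hsm, hdeg, htop, hev⟩ := ih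
      set LinQ := Lin (a j) with hLinQ
      refine ⟨T (X j) Q + LinQ * Q + C (b j) * Q, ?_, ?_, ?_, ?_⟩
      · intro d
        rw [coeff_add, coeff_add]
        refine (ContDiff.add ?_ ?_).add ?_
        · rw [coeff_T]
          exact (((hsm d).fderiv_right (by simp)).clm_apply (hX j))
        · exact smoothCoeffs_mul (smoothCoeffs_Lin (ha j)) hsm d
        · exact smoothCoeffs_mul (smoothCoeffs_C (hb j)) hsm d
      · have h1 : (T (X j) Q).totalDegree ≤ l.length := by
          refine le_trans (Finset.sup_le fun d hd => ?_) hdeg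
          exact le_totalDegree (support_T _ _ hd)
        have h2 : (LinQ * Q).totalDegree ≤ 1 + l.length :=
          le_trans (totalDegree_mul _ _) (add_le_add (totalDegree_Lin _) hdeg)
        have h3 : (C (b j) * Q).totalDegree ≤ l.length := by
          refine le_trans (totalDegree_mul _ _) ?_
          simpa [totalDegree_C] using hdeg
        calc (T (X j) Q + LinQ * Q + C (b j) * Q).totalDegree
            ≤ max (max (T (X j) Q).totalDegree (LinQ * Q).totalDegree)
              (C (b j) * Q).totalDegree :=
              le_trans (totalDegree_add _ _) (max_le_max (totalDegree_add _ _) le_rfl)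
          _ ≤ (j :: l).length := by
              simp only [List.length_cons, max_le_iff]
              omega
      · intro d hd
        rw [List.length_cons] at hd
        have hd1 : l.length < (d.sum fun _ e => e) := by omega
        rw [coeff_add, coeff_add]
        rw [coeff_eq_zero_of_totalDegree_lt (f := T (X j) Q) (lt_of_le_of_lt (by
          refine le_trans (Finset.sup_le fun e he => ?_) hdeg
          exact le_totalDegree (support_T _ _ he)) hd1)]
        rw [coeff_eq_zero_of_totalDegree_lt (f := C (b j) * Q) (lt_of_le_of_lt (by
          refine le_trans (totalDegree_mul _ _) ?_
          simpa [totalDegree_C] using hdeg) hd1)]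
        rw [zero_add, add_zero, List.map_cons, List.prod_cons]
        rw [coeff_mul, coeff_mul]
        apply Finset.sum_congr rfl
        rintro ⟨u, v⟩ huv
        rw [Finset.HasAntidiagonal.mem_antidiagonal] at huv
        have hsum : (u.sum fun _ e => e) + (v.sum fun _ e => e) = (d.sum fun _ e => e) := by
          rw [← huv]
          exact (Finsupp.sum_add_index' (fun _ => rfl) (fun _ _ _ => rfl)).symm
        simp only []
        by_cases hv : (v.sum fun _ e => e) = l.length
        · rw [htop v hv]
        · rcases lt_or_gt_of_ne hv with hlt | hgt
          · have hu2 : 1 < (u.sum fun _ e => e) := by omega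
            rw [coeff_eq_zero_of_totalDegree_lt (lt_of_le_of_lt (totalDegree_Lin _) hu2)]
            rw [zero_mul, zero_mul]
          · have hvQ : Q.coeff v = 0 :=
              coeff_eq_zero_of_totalDegree_lt (lt_of_le_of_lt hdeg hgt)
            have hvP : ((l.map fun j => Lin (a j)).prod).coeff v = 0 :=
              coeff_eq_zero_of_totalDegree_lt
                (lt_of_le_of_lt (isHomogeneous_linProd a l).totalDegree_le hgt)
            rw [hvQ, hvP]
      · intro lam x
        have hfold : ((l.map D).foldr (· ∘ ·) id (fun y => ∏ i, N i y ^ lam i)) =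
            fun y => (∏ i, N i y ^ lam i) * ev lam y Q := funext fun y => hev lam y
        have hstep : (((j :: l).map D).foldr (· ∘ ·) id (fun y => ∏ i, N i y ^ lam i)) x =
            D j (fun y => (∏ i, N i y ^ lam i) * ev lam y Q) x := by
          simp only [List.map_cons, List.foldr_cons, Function.comp_apply]
          rw [hfold]
        rw [hstep, hD]
        set H : E → ℝ := fun y => ev lam y Q with hH
        set Nl : E → ℝ := fun y => ∏ i, N i y ^ lam i with hNl
        have hHdiff : DifferentiableAt ℝ H x :=
          ((contDiff_evFun lam Q hsm).differentiable (by simp)) x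
        have hNldiff : DifferentiableAt ℝ Nl x := by
          have : ContDiff ℝ (⊤ : ℕ∞) Nl := contDiff_prod fun i _ => (hN i).pow (lam i)
          exact (this.differentiable (by simp)) x
        have hmul : fderiv ℝ (fun y => Nl y * H y) x (X j x) =
            Nl x * fderiv ℝ H x (X j x) + H x * fderiv ℝ Nl x (X j x) := by
          rw [(hNldiff.hasFDerivAt.fun_mul hHdiff.hasFDerivAt).fderiv]
          simp [smul_eq_mul]
        rw [hmul]
        have hfH : fderiv ℝ H x (X j x) = ev lam x (T (X j) Q) :=
          fderiv_evFun lam Q hsm (X j) x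
        have hfN : fderiv ℝ Nl x (X j x) =
            Nl x * ∑ i, (lam i : ℝ) * fderiv ℝ (N i) x (X j x) / N i x :=
          fderiv_prod_pow N hN hNpos lam x (X j x)
        rw [hfH, hfN]
        have hevQ' : ev lam x (T (X j) Q + LinQ * Q + C (b j) * Q) =
            ev lam x (T (X j) Q) + (∑ i, a j i x * (lam i : ℝ)) * ev lam x Q +
              b j x * ev lam x Q := by
          rw [map_add, map_add, map_mul, map_mul, ev_C, ev_Lin]
        rw [hevQ']
        have hsum : ∑ i, (lam i : ℝ) * fderiv ℝ (N i) x (X j x) / N i x =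
            ∑ i, a j i x * (lam i : ℝ) :=
          Finset.sum_congr rfl fun i _ => by rw [ha_def]; ring
        rw [hsum]
        show Nl x * ev lam x (T (X j) Q) + H x * (Nl x * ∑ i, a j i x * (lam i:ℝ)) +
            b j x * (Nl x * H x) = _
        ring

end CLP



/-- Let `N₁,…,N_r` be smooth positive functions and `D₁,…,D_p`
first-order differential operators `Dⱼ = Xⱼ + bⱼ` (vector field plus multiplication).
For nonnegative integers `λ₁,…,λ_r` set `N_λ = N₁^{λ₁}⋯N_r^{λ_r}`.  Then
`l_λ(D₁∘⋯∘D_p) = (1/N_λ)·(D₁∘⋯∘D_p)(N_λ)` is, at each point, a polynomial of degree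
at most `p` in `(λ₁,…,λ_r)` with `C^∞` coefficients, whose degree-`p` homogeneous
part equals `∏ⱼ (Σᵢ λᵢ Xⱼ(Nᵢ)/Nᵢ)`. -/
theorem classical_limit_polynomial
    {E : Type*} [NormedAddCommGroup E] [NormedSpace ℝ E]
    (p r : ℕ)
    (X : Fin p → E → E) (b : Fin p → E → ℝ) (N : Fin r → E → ℝ)
    (hX : ∀ j, ContDiff ℝ (⊤ : ℕ∞) (X j)) (hb : ∀ j, ContDiff ℝ (⊤ : ℕ∞) (b j))
    (hN : ∀ i, ContDiff ℝ (⊤ : ℕ∞) (N i)) (hNpos : ∀ i x, 0 < N i x)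
    (D : Fin p → (E → ℝ) → E → ℝ)
    (hD : ∀ j f x, D j f x = fderiv ℝ f x (X j x) + b j x * f x) :
    ∃ (S : Finset (Fin r →₀ ℕ)) (c : (Fin r →₀ ℕ) → E → ℝ),
      (∀ d ∈ S, ContDiff ℝ (⊤ : ℕ∞) (c d)) ∧
      (∀ d ∈ S, (d.sum fun _ e => e) ≤ p) ∧
      (∀ (lam : Fin r → ℕ) (x : E),
        ((List.ofFn D).foldr (· ∘ ·) id (fun y => ∏ i, N i y ^ lam i)) x /
            (∏ i, N i x ^ lam i) =
          ∑ d ∈ S, c d x * ∏ i, (lam i : ℝ) ^ (d i)) ∧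
      (∀ (lam : Fin r → ℕ) (x : E),
        ∑ d ∈ S.filter (fun d => (d.sum fun _ e => e) = p),
            c d x * ∏ i, (lam i : ℝ) ^ (d i) =
          ∏ j, ∑ i, (lam i : ℝ) * fderiv ℝ (N i) x (X j x) / N i x) := by
  classical
  obtain ⟨Q, hsm, hdeg, htop, hev⟩ :=
    CLP.main X b N hX hb hN hNpos D hD (List.finRange p)
  rw [List.length_finRange] at hdeg htop
  set L : Fin p → MvPolynomial (Fin r) (E → ℝ) :=
    fun j => CLP.Lin fun i x => fderiv ℝ (N i) x (X j x) / N i x with hL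
  set P : MvPolynomial (Fin r) (E → ℝ) := ((List.finRange p).map L).prod with hP
  have hPhom : P.IsHomogeneous p := by
    have := CLP.isHomogeneous_linProd (fun j i x => fderiv ℝ (N i) x (X j x) / N i x)
      (List.finRange p)
    rwa [List.length_finRange] at this
  have hPdeg : ∀ d ∈ P.support, (d.sum fun _ e => e) = p := by
    intro d hd
    have h := hPhom (MvPolynomial.mem_support_iff.mp hd)
    rw [CLP.sum_eq_degree, Finsupp.degree_eq_weight_one]
    exact h
  refine ⟨Q.support, Q.coeff, fun d _ => hsm d, ?_, ?_, ?_⟩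
  · intro d hd
    exact (MvPolynomial.le_totalDegree hd).trans hdeg
  · intro lam x
    have hne : (∏ i, N i x ^ lam i) ≠ 0 :=
      (Finset.prod_pos fun i _ => pow_pos (hNpos i x) (lam i)).ne'
    rw [List.ofFn_eq_map, hev lam x, mul_div_cancel_left₀ _ hne]
    exact CLP.ev_eq_sum lam x Q subset_rfl
  · intro lam x
    have hsub : P.support ⊆ Q.support.filter fun d => (d.sum fun _ e => e) = p := by
      intro d hd
      rw [Finset.mem_filter]
      refine ⟨?_, hPdeg d hd⟩
      rw [MvPolynomial.mem_support_iff, htop d (hPdeg d hd)]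
      exact MvPolynomial.mem_support_iff.mp hd
    have step1 : ∑ d ∈ Q.support.filter (fun d => (d.sum fun _ e => e) = p),
        Q.coeff d x * ∏ i, (lam i : ℝ) ^ (d i) =
        ∑ d ∈ Q.support.filter (fun d => (d.sum fun _ e => e) = p),
        P.coeff d x * ∏ i, (lam i : ℝ) ^ (d i) := by
      refine Finset.sum_congr rfl fun d hd => ?_
      rw [htop d (Finset.mem_filter.mp hd).2]
    have step2 : ∑ d ∈ Q.support.filter (fun d => (d.sum fun _ e => e) = p),
        P.coeff d x * ∏ i, (lam i : ℝ) ^ (d i) =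
        ∑ d ∈ P.support, P.coeff d x * ∏ i, (lam i : ℝ) ^ (d i) := by
      refine (Finset.sum_subset hsub fun d _ hd => ?_).symm
      rw [MvPolynomial.notMem_support_iff] at hd
      simp [hd]
    rw [step1, step2, ← CLP.ev_eq_sum lam x P subset_rfl]
    rw [hP, map_list_prod, List.map_map, ← List.ofFn_eq_map, List.prod_ofFn]
    refine Finset.prod_congr rfl fun j _ => ?_
    rw [Function.comp_apply, hL, CLP.ev_Lin]
    exact Finset.sum_congr rfl fun i _ => by ring
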